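/- Let σ : G₁ × G₁ → ℂ be unit-circle valued and for a, b : G₁ → A define the σ-twisted convolution (a ⋆_σ b)(x) := ∫_{G₁} a(y) * β_y( b(y⁻¹x) ) * σ(y, y⁻¹x) dμ₁(y). For X ∈ G₂ define β̃_X[h](z) := β_X( h(z) ) * ṽ(X,z). Then for all f, g : G₁ → A such that the relevant integrands are Bochner integrable, and all x ∈ G₁: ( β̃_X[f] ⋆_σ β̃_X[g] )(x) = β̃_X[ f ⋆_{σ'} g ](x), where σ'(y,z) := φ(X,y,z)³ · σ(y,z). Hence β̃_X gives an isomorphism between the twisted crossed products with multipliers σ and varφ_X·σ, where varφ_X(y,z) = φ(X,y,z)³. -/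

import Mathlib

/-!
Substituting `z = y⁻¹x`, the two integrands agree pointwise. Moving `β_X` past `β_y` costs the
twisted commutator `ṽ(X,y)` (the twisted-action relation, used for `(X,y)` and `(y,X)`), and the
product `ṽ(X,y) β_y(ṽ(X,z))` equals `φ(X,y,z)³ ṽ(X,yz)`: solving the deformed cocycle condition
for `β_y(v(X,z))`, `β_y(v(z,X))` and `v(X,y) v(Xy,z)` contributes one factor `φ(X,y,z)` each,
once antisymmetry has moved `X` to the front and `‖φ‖ = 1` has turned `conj φ` into `φ⁻¹`.
Finally `β_X` is an isometric linear map, so it commutes with the Bochner integral.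
-/

open MeasureTheory

namespace Unitary

variable {A : Type*} [Monoid A] [StarMul A]

theorem coe_star_mul_self_mul (u : unitary A) (a : A) : star (u : A) * (u * a) = a := by
  rw [← mul_assoc, star_mul_self_of_mem u.prop, one_mul]

end Unitary

section TwistedAction

variable {G A : Type*} [CommMonoid G] [Semiring A] [StarRing A] [Algebra ℂ A]
  (β : G → A ≃⋆ₐ[ℂ] A) (v : G → G → unitary A)

/-- The paper's `ṽ(ξ, η)`. -/
def twistedCommutator (ξ η : G) : A := v ξ η * star (v η ξ : A)

/-- The paper's `β̃_ξ[h](η)`, evaluated at the value `a = h(η)`. -/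
def betaTilde (ξ : G) (a : A) (η : G) : A := β ξ a * twistedCommutator v ξ η

theorem twistedCommutator_mul_apply_apply
    (htw : ∀ ξ η (a : A), β ξ (β η a) = (v ξ η : A) * β (ξ * η) a * star ((v ξ η : A)))
    (ξ η : G) (b : A) :
    twistedCommutator v ξ η * β η (β ξ b) = β ξ (β η b) * twistedCommutator v ξ η := by
  simp only [twistedCommutator, htw, mul_comm η ξ, mul_assoc, Unitary.coe_star_mul_self_mul]

theorem apply_cocycle_eq_smul (φ : G → G → G → ℂ)
    (hcoc : ∀ ξ η ζ, (v ξ η : A) * (v (ξ * η) ζ : A)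
      = φ ξ η ζ • (β ξ ((v η ζ : A)) * (v ξ (η * ζ) : A)))
    {ξ η ζ : G} (hφ : φ ξ η ζ ≠ 0) :
    β ξ (v η ζ) = (φ ξ η ζ)⁻¹ • ((v ξ η : A) * v (ξ * η) ζ * star (v ξ (η * ζ) : A)) := by
  rw [hcoc, smul_mul_assoc, mul_assoc, Unitary.mul_star_self_of_mem (v ξ (η * ζ)).prop, mul_one,
    inv_smul_smul₀ hφ]

variable [StarModule ℂ A] (φ : G → G → G → ℂ)
  (hφabs : ∀ ξ η ζ, ‖φ ξ η ζ‖ = 1)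
  (hswap₁₂ : ∀ ξ η ζ, φ η ξ ζ = (φ ξ η ζ)⁻¹)
  (hswap₂₃ : ∀ ξ η ζ, φ ξ ζ η = (φ ξ η ζ)⁻¹)
  (hcoc : ∀ ξ η ζ, (v ξ η : A) * (v (ξ * η) ζ : A)
    = φ ξ η ζ • (β ξ ((v η ζ : A)) * (v ξ (η * ζ) : A)))
include hφabs hswap₁₂ hswap₂₃ hcoc

theorem twistedCommutator_mul_apply_twistedCommutator {ξ η ζ : G} (hv : v η ζ = 1) :
    twistedCommutator v ξ η * β η (twistedCommutator v ξ ζ)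
      = φ ξ η ζ ^ 3 • twistedCommutator v ξ (η * ζ) := by
  have hne : ∀ ξ η ζ, φ ξ η ζ ≠ 0 := fun ξ η ζ =>
    norm_ne_zero_iff.mp (by rw [hφabs]; exact one_ne_zero)
  have hmid : β η (v ξ ζ)
      = φ ξ η ζ • ((v η ξ : A) * v (ξ * η) ζ * star (v η (ξ * ζ) : A)) := by
    rw [apply_cocycle_eq_smul β v φ hcoc (hne η ξ ζ), hswap₁₂, inv_inv, mul_comm η ξ]
  have hright : β η (star (v ζ ξ : A))
      = φ ξ η ζ • ((v η (ξ * ζ) : A) * star (v (η * ζ) ξ : A)) := by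
    rw [map_star, apply_cocycle_eq_smul β v φ hcoc (hne η ζ ξ), hv, hswap₂₃, hswap₁₂, inv_inv,
      mul_comm ζ ξ, star_smul, Submonoid.coe_one, one_mul, star_mul, star_star, Complex.star_def,
      Complex.inv_eq_conj (hφabs ξ η ζ), Complex.conj_conj]
  have hleft : (v ξ η : A) * v (ξ * η) ζ = φ ξ η ζ • (v ξ (η * ζ) : A) := by
    rw [hcoc, hv, Submonoid.coe_one, map_one, one_mul]
  rw [twistedCommutator, twistedCommutator, map_mul, hmid, hright]
  simp only [smul_mul_assoc, mul_smul_comm, smul_smul, mul_assoc, Unitary.coe_star_mul_self_mul]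
  rw [← mul_assoc (v ξ η : A), hleft, smul_mul_assoc, smul_smul, twistedCommutator]
  congr 1
  ring

theorem betaTilde_mul_apply_betaTilde
    (htw : ∀ ξ η (a : A), β ξ (β η a) = (v ξ η : A) * β (ξ * η) a * star ((v ξ η : A)))
    {ξ η ζ : G} (hv : v η ζ = 1) (a b : A) :
    betaTilde β v ξ a η * β η (betaTilde β v ξ b ζ)
      = φ ξ η ζ ^ 3 • betaTilde β v ξ (a * β η b) (η * ζ) :=
  calc betaTilde β v ξ a η * β η (betaTilde β v ξ b ζ)
      = β ξ a * (twistedCommutator v ξ η * β η (β ξ b)) * β η (twistedCommutator v ξ ζ) := by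
        simp only [betaTilde, map_mul, mul_assoc]
    _ = β ξ a * β ξ (β η b) * (twistedCommutator v ξ η * β η (twistedCommutator v ξ ζ)) := by
        rw [twistedCommutator_mul_apply_apply β v htw]
        simp only [mul_assoc]
    _ = φ ξ η ζ ^ 3 • betaTilde β v ξ (a * β η b) (η * ζ) := by
        rw [twistedCommutator_mul_apply_twistedCommutator β v φ hφabs hswap₁₂ hswap₂₃ hcoc hv,
          mul_smul_comm, betaTilde, map_mul]

end TwistedAction

open scoped CStarAlgebra in
theorem NonUnitalStarAlgHom.integral_apply_mul_const {α A B F : Type*} [MeasurableSpace α]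
    {μ : Measure α} [NonUnitalCStarAlgebra A] [NonUnitalCStarAlgebra B] [FunLike F A B]
    [NonUnitalAlgHomClass F ℂ A B] [StarHomClass F A B] (e : F) {h : α → A}
    (hh : Integrable h μ) (c : B) :
    ∫ y, e (h y) * c ∂μ = e (∫ y, h y ∂μ) * c :=
  ((ContinuousLinearMap.mul ℂ B).flip c ∘L ⟨(e : A →ₗ[ℂ] B), map_continuous e⟩).integral_comp_comm
    hh

theorem beta_tilde_intertwines_multipliers_general
    {A : Type*} [NormedRing A] [StarRing A] [CStarRing A] [NormedAlgebra ℂ A]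
    [CompleteSpace A] [StarModule ℂ A]
    {G₁ G₂ : Type*} [CommGroup G₁] [CommGroup G₂]
    (β : G₁ × G₂ → (A ≃⋆ₐ[ℂ] A)) (v : G₁ × G₂ → G₁ × G₂ → unitary A)
    (htw : ∀ ξ η (a : A), β ξ (β η a) = (v ξ η : A) * β (ξ * η) a * star ((v ξ η : A)))
    (φ : G₁ × G₂ → G₁ × G₂ → G₁ × G₂ → ℂ)
    (hφabs : ∀ ξ η ζ, ‖φ ξ η ζ‖ = 1)
    (hswap₁₂ : ∀ ξ η ζ, φ η ξ ζ = (φ ξ η ζ)⁻¹)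
    (hswap₂₃ : ∀ ξ η ζ, φ ξ ζ η = (φ ξ η ζ)⁻¹)
    (hcoc : ∀ ξ η ζ, (v ξ η : A) * (v (ξ * η) ζ : A)
      = φ ξ η ζ • (β ξ ((v η ζ : A)) * (v ξ (η * ζ) : A)))
    (hv₁ : ∀ x y : G₁, v (x, 1) (y, 1) = 1)
    (vt : G₁ × G₂ → G₁ × G₂ → A)
    (hvt : ∀ ξ η, vt ξ η = (v ξ η : A) * star ((v η ξ : A)))
    [MeasurableSpace G₁]
    (μ₁ : Measure G₁)
    (σ : G₁ → G₁ → ℂ)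
    (X : G₂) (f g : G₁ → A) (x : G₁)
    (hint₂ : Integrable (fun y =>
      ((φ ((1 : G₁), X) (y, 1) (y⁻¹ * x, 1)) ^ (3 : ℕ) * σ y (y⁻¹ * x)) •
        (f y * β (y, 1) (g (y⁻¹ * x)))) μ₁) :
    ∫ y, σ y (y⁻¹ * x) •
        ((β ((1 : G₁), X) (f y) * vt ((1 : G₁), X) (y, 1)) *
          β (y, 1) (β ((1 : G₁), X) (g (y⁻¹ * x)) * vt ((1 : G₁), X) (y⁻¹ * x, 1))) ∂μ₁
      = β ((1 : G₁), X)
          (∫ y, ((φ ((1 : G₁), X) (y, 1) (y⁻¹ * x, 1)) ^ (3 : ℕ) * σ y (y⁻¹ * x)) •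
            (f y * β (y, 1) (g (y⁻¹ * x))) ∂μ₁)
        * vt ((1 : G₁), X) (x, 1) := by
  obtain rfl : vt = twistedCommutator v := funext₂ hvt
  let _ : CStarAlgebra A := {}
  have hpointwise : ∀ y, σ y (y⁻¹ * x) •
      (betaTilde β v (1, X) (f y) (y, 1) *
        β (y, 1) (betaTilde β v (1, X) (g (y⁻¹ * x)) (y⁻¹ * x, 1)))
      = β (1, X) ((φ (1, X) (y, 1) (y⁻¹ * x, 1) ^ 3 * σ y (y⁻¹ * x)) •
          (f y * β (y, 1) (g (y⁻¹ * x)))) * twistedCommutator v (1, X) (x, 1) := by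
    intro y
    rw [betaTilde_mul_apply_betaTilde β v φ hφabs hswap₁₂ hswap₂₃ hcoc htw (hv₁ y (y⁻¹ * x)),
      Prod.mk_mul_mk, mul_inv_cancel_left, one_mul, smul_smul, mul_comm (σ _ _), betaTilde,
      _root_.map_smul, smul_mul_assoc]
  exact (integral_congr_ae (.of_forall hpointwise)).trans
    (NonUnitalStarAlgHom.integral_apply_mul_const _ hint₂ _)

/-- **setting of Theorem 8.1.**  With `(β, v, φ, ṽ)` as in Theorem 8.1 and
`G₁` locally compact with Haar measure `μ₁`, let `σ` be a unit-circle-valued multiplier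
on `G₁` and define the `σ`-twisted convolution
`(a ⋆_σ b)(x) := ∫ a(y) β_y(b(y⁻¹x)) σ(y,y⁻¹x) dμ₁(y)` and
`β̃_X[h](z) := β_X(h(z)) ṽ(X,z)`.  Then for integrable data,
`(β̃_X[f] ⋆_σ β̃_X[g])(x) = β̃_X[f ⋆_{σ'} g](x)` where `σ'(y,z) = φ(X,y,z)³ σ(y,z)`:
`β̃_X` gives an isomorphism between the twisted crossed products with multipliers `σ`
and `varφ_X·σ`. -/
theorem beta_tilde_intertwines_multipliers
    {A : Type*} [NormedRing A] [StarRing A] [CStarRing A] [NormedAlgebra ℂ A]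
    [CompleteSpace A] [StarModule ℂ A]
    {G₁ G₂ : Type*} [CommGroup G₁] [CommGroup G₂]
    (β : G₁ × G₂ → (A ≃⋆ₐ[ℂ] A)) (v : G₁ × G₂ → G₁ × G₂ → unitary A)
    (htw : ∀ ξ η (a : A), β ξ (β η a) = (v ξ η : A) * β (ξ * η) a * star ((v ξ η : A)))
    (φ : G₁ × G₂ → G₁ × G₂ → G₁ × G₂ → ℂ)
    (hφabs : ∀ ξ η ζ, ‖φ ξ η ζ‖ = 1)
    (hmul₁ : ∀ ξ ξ' η ζ, φ (ξ * ξ') η ζ = φ ξ η ζ * φ ξ' η ζ)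
    (hmul₂ : ∀ ξ η η' ζ, φ ξ (η * η') ζ = φ ξ η ζ * φ ξ η' ζ)
    (hmul₃ : ∀ ξ η ζ ζ', φ ξ η (ζ * ζ') = φ ξ η ζ * φ ξ η ζ')
    (hswap₁₂ : ∀ ξ η ζ, φ η ξ ζ = (φ ξ η ζ)⁻¹)
    (hswap₂₃ : ∀ ξ η ζ, φ ξ ζ η = (φ ξ η ζ)⁻¹)
    (hcoc : ∀ ξ η ζ, (v ξ η : A) * (v (ξ * η) ζ : A)
      = φ ξ η ζ • (β ξ ((v η ζ : A)) * (v ξ (η * ζ) : A)))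
    (hv₁ : ∀ x y : G₁, v (x, 1) (y, 1) = 1)
    (hv₂ : ∀ X Y : G₂, v ((1 : G₁), X) (1, Y) = 1)
    (hφG₁ : ∀ x y z : G₁, φ (x, 1) (y, 1) (z, 1) = 1)
    (hφG₂ : ∀ (ξ : G₁ × G₂) (X Y : G₂),
      φ ξ ((1 : G₁), X) (1, Y) = 1 ∧ φ ((1 : G₁), X) ξ (1, Y) = 1 ∧
        φ ((1 : G₁), X) ((1 : G₁), Y) ξ = 1)
    (vt : G₁ × G₂ → G₁ × G₂ → A)
    (hvt : ∀ ξ η, vt ξ η = (v ξ η : A) * star ((v η ξ : A)))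
    [TopologicalSpace G₁] [IsTopologicalGroup G₁] [LocallyCompactSpace G₁]
    [MeasurableSpace G₁] [BorelSpace G₁]
    (μ₁ : Measure G₁) [μ₁.IsHaarMeasure]
    (σ : G₁ → G₁ → ℂ) (hσ : ∀ y z, ‖σ y z‖ = 1)
    (X : G₂) (f g : G₁ → A) (x : G₁)
    (hint₁ : Integrable (fun y => σ y (y⁻¹ * x) •
      ((β ((1 : G₁), X) (f y) * vt ((1 : G₁), X) (y, 1)) *
        β (y, 1) (β ((1 : G₁), X) (g (y⁻¹ * x)) * vt ((1 : G₁), X) (y⁻¹ * x, 1)))) μ₁)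
    (hint₂ : Integrable (fun y =>
      ((φ ((1 : G₁), X) (y, 1) (y⁻¹ * x, 1)) ^ (3 : ℕ) * σ y (y⁻¹ * x)) •
        (f y * β (y, 1) (g (y⁻¹ * x)))) μ₁) :
    ∫ y, σ y (y⁻¹ * x) •
        ((β ((1 : G₁), X) (f y) * vt ((1 : G₁), X) (y, 1)) *
          β (y, 1) (β ((1 : G₁), X) (g (y⁻¹ * x)) * vt ((1 : G₁), X) (y⁻¹ * x, 1))) ∂μ₁
      = β ((1 : G₁), X)
          (∫ y, ((φ ((1 : G₁), X) (y, 1) (y⁻¹ * x, 1)) ^ (3 : ℕ) * σ y (y⁻¹ * x)) •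
            (f y * β (y, 1) (g (y⁻¹ * x))) ∂μ₁)
        * vt ((1 : G₁), X) (x, 1) :=
  beta_tilde_intertwines_multipliers_general β v htw φ hφabs hswap₁₂ hswap₂₃ hcoc hv₁ vt hvt μ₁ σ X
    f g x hint₂
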